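/- Scaling of the growth function: for a homogeneous linear differential operator D of order k (c_α = 0 for |α| < k) and the scaled set X^h with points z + h(xⱼ - z), the weighted ℓ₁ growth function satisfies ρ_{q,D}(z,X^h,1,μ) = h^{μ-k} ρ_{q,D}(z,X,1,μ) for all h > 0 and μ ≥ 0. -/

import Mathlib

open scoped BigOperators

/-- Partial derivative in the `i`-th coordinate direction. -/
noncomputable def pd {d : ℕ} (i : Fin d) (f : EuclideanSpace ℝ (Fin d) → ℝ) :
    EuclideanSpace ℝ (Fin d) → ℝ :=
  fun x => lineDeriv ℝ f x (EuclideanSpace.single i 1)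

/-- Multi-index partial derivative ∂^α f. -/
noncomputable def pdMulti {d : ℕ} (α : Fin d → ℕ) (f : EuclideanSpace ℝ (Fin d) → ℝ) :
    EuclideanSpace ℝ (Fin d) → ℝ :=
  (List.ofFn (fun i : Fin d => (pd i)^[α i])).foldr (· ∘ ·) id f

/-- The linear differential operator D = ∑_{|α|≤k} c_α ∂^α applied to f at y. -/
noncomputable def Dapply {d : ℕ} (k : ℕ)
    (c : (Fin d → ℕ) → EuclideanSpace ℝ (Fin d) → ℝ)
    (f : EuclideanSpace ℝ (Fin d) → ℝ) (y : EuclideanSpace ℝ (Fin d)) : ℝ :=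
  ∑ s ∈ Finset.range (k + 1), ∑ α ∈ Finset.Nat.antidiagonalTuple d s,
    c α y * pdMulti α f y

/-- Evaluation of a d-variate polynomial at a point of ℝ^d. -/
noncomputable def evalP {d : ℕ} (P : MvPolynomial (Fin d) ℝ)
    (y : EuclideanSpace ℝ (Fin d)) : ℝ :=
  MvPolynomial.eval (fun i => y i) P

/-- The weighted ℓ₁ growth function ρ_{q,D}(z,X,1,μ) in its dual (infimum) form. -/
noncomputable def rho1 {d N : ℕ} (k q : ℕ)
    (c : (Fin d → ℕ) → EuclideanSpace ℝ (Fin d) → ℝ)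
    (z : EuclideanSpace ℝ (Fin d)) (x : Fin N → EuclideanSpace ℝ (Fin d)) (μ : ℝ) : ℝ :=
  sInf {r : ℝ | ∃ w : Fin N → ℝ,
    (∀ P : MvPolynomial (Fin d) ℝ, P.totalDegree < q →
      Dapply k c (evalP P) z = ∑ j, w j * evalP P (x j)) ∧
    r = ∑ j, |w j| * ‖x j - z‖ ^ μ}

/-! Precomposing a polynomial with the homothety `y ↦ z + h (y - z)` keeps it in `Π_q`, turns
its values on `X` into its values on `X^h`, and multiplies `∂^α p (z)` by `h^|α|`; since `D` only
has terms of order `k`, it multiplies `Dp(z)` by `h^k`. Hence `w` is exact for `X^h` iff `h^k w` is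
exact for `X`, and the weighted cost of `w` on `X^h` is `h^(μ-k)` times that of `h^k w` on `X`. -/

open MvPolynomial Function
open scoped Pointwise

section Foldr

variable {ι α : Type*}

lemma Function.Semiconj.foldr_comp_map {β : Type*} {φ : α → β} {f : ι → α → α} {g : ι → β → β}
    (h : ∀ i, Semiconj φ (f i) (g i)) (l : List ι) :
    Semiconj φ ((l.map f).foldr (· ∘ ·) id) ((l.map g).foldr (· ∘ ·) id) := by
  induction l with
  | nil => exact Semiconj.id_right
  | cons i l ih => exact (h i).comp_right ih

lemma foldr_comp_map_apply_eq_prod_smul {R : Type*} [CommMonoid R] [MulAction R α]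
    {φ : α → α} {f : ι → α → α} {c : ι → R}
    (hf : ∀ i (r : R) x, f i (r • x) = r • f i x) (hφ : ∀ i x, f i (φ x) = c i • φ (f i x))
    (l : List ι) (x : α) :
    (l.map f).foldr (· ∘ ·) id (φ x) = (l.map c).prod • φ ((l.map f).foldr (· ∘ ·) id x) := by
  induction l with
  | nil => simp
  | cons i l ih =>
    simp only [List.map_cons, List.foldr_cons, comp_apply, ih, hf, hφ, List.prod_cons, ← mul_smul,
      mul_comm]

end Foldr

section Derivative

variable {𝕜 σ : Type*} [NontriviallyNormedField 𝕜] [DecidableEq σ]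

lemma MvPolynomial.hasDerivAt_eval_add_smul_single (i : σ) (P : MvPolynomial σ 𝕜) (y : σ → 𝕜) :
    HasDerivAt (fun t : 𝕜 => eval (y + t • Pi.single i 1) P) (eval y (pderiv i P)) 0 := by
  induction P using MvPolynomial.induction_on with
  | C a => simpa using hasDerivAt_const (0 : 𝕜) a
  | add p q hp hq => simp only [map_add]; exact hp.add hq
  | mul_X p j hp =>
    set e : σ → 𝕜 := Pi.single i 1 with he
    have hX : HasDerivAt (fun t : 𝕜 => y j + t * e j) (e j) 0 := by
      simpa using ((hasDerivAt_id (0 : 𝕜)).mul_const (e j)).const_add (y j)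
    simp only [map_mul, eval_X, Pi.add_apply, Pi.smul_apply, smul_eq_mul]
    refine (hp.mul hX).congr_deriv ?_
    rw [Derivation.leibniz, pderiv_X]
    rcases eq_or_ne i j with rfl | hij
    · simp [he, add_comm, mul_comm]
    · simp [he, hij, mul_comm]

end Derivative

section Homothety

variable {R σ : Type*} [CommRing R]

lemma totalDegree_bind₁_le {f : σ → MvPolynomial σ R} (hf : ∀ i, (f i).totalDegree ≤ 1)
    (P : MvPolynomial σ R) : (bind₁ f P).totalDegree ≤ P.totalDegree := by
  conv_lhs => rw [P.as_sum, map_sum]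
  refine (totalDegree_finsetSum _ _).trans (Finset.sup_le fun v hv => ?_)
  refine le_trans ?_ (le_totalDegree hv)
  rw [bind₁_monomial]
  refine (totalDegree_mul _ _).trans ?_
  rw [totalDegree_C, zero_add]
  refine (totalDegree_finsetProd _ _).trans (Finset.sum_le_sum fun i _ => ?_)
  exact (totalDegree_pow _ _).trans (by simpa using Nat.mul_le_mul_left _ (hf i))

noncomputable def homothetySubst (z : σ → R) (a : R) : σ → MvPolynomial σ R :=
  fun i => C (z i) + a • (X i - C (z i))

lemma eval_bind₁_homothetySubst (z : σ → R) (a : R) (P : MvPolynomial σ R) (y : σ → R) :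
    eval y (bind₁ (homothetySubst z a) P) = eval (z + a • (y - z)) P := by
  rw [← aeval_eq_eval, aeval_bind₁, aeval_eq_eval]
  refine congrArg (fun v => eval v P) (funext fun i => ?_)
  simp [homothetySubst]

lemma totalDegree_homothetySubst_le (z : σ → R) (a : R) (i : σ) :
    (homothetySubst z a i).totalDegree ≤ 1 := by
  refine (totalDegree_add _ _).trans (max_le (by simp) ?_)
  refine (totalDegree_smul_le _ _).trans ((totalDegree_sub_C_le _ _).trans ?_)
  exact (totalDegree_monomial_le _ _).trans (by simp)

lemma pderiv_bind₁_homothetySubst [DecidableEq σ] (z : σ → R) (a : R) (i : σ)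
    (P : MvPolynomial σ R) :
    pderiv i (bind₁ (homothetySubst z a) P) = a • bind₁ (homothetySubst z a) (pderiv i P) := by
  induction P using MvPolynomial.induction_on with
  | C r => simp
  | add p q hp hq => simp [hp, hq]
  | mul_X p j hp =>
    rcases eq_or_ne i j with rfl | hij
    · simp [Derivation.leibniz, hp, homothetySubst]
    · simp [Derivation.leibniz, hp, homothetySubst, hij]

lemma iterate_pderiv_bind₁_homothetySubst [DecidableEq σ] (z : σ → R) (a : R) (i : σ) (n : ℕ)
    (P : MvPolynomial σ R) :
    (pderiv i)^[n] (bind₁ (homothetySubst z a) P)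
      = a ^ n • bind₁ (homothetySubst z a) ((pderiv i)^[n] P) := by
  induction n with
  | zero => simp
  | succ n ih =>
    rw [iterate_succ_apply', ih, Derivation.map_smul, pderiv_bind₁_homothetySubst, smul_smul,
      pow_succ, iterate_succ_apply']

end Homothety

section Polynomial

variable {d : ℕ}

lemma pd_evalP (i : Fin d) (P : MvPolynomial (Fin d) ℝ) :
    pd i (evalP P) = evalP (pderiv i P) := by
  funext y
  have hline : (fun t : ℝ => evalP P (y + t • EuclideanSpace.single i 1))
      = fun t : ℝ => eval (y.ofLp + t • Pi.single i 1) P := by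
    funext t
    refine congrArg (fun v => eval v P) (funext fun j => ?_)
    simp [Pi.single_apply]
  simp only [pd, lineDeriv, hline]
  exact (hasDerivAt_eval_add_smul_single i P y.ofLp).deriv

noncomputable def pderivMulti {R : Type*} [CommSemiring R] (α : Fin d → ℕ) :
    MvPolynomial (Fin d) R → MvPolynomial (Fin d) R :=
  (List.ofFn fun i => (pderiv i : MvPolynomial (Fin d) R → MvPolynomial (Fin d) R)^[α i]).foldr
    (· ∘ ·) id

lemma pdMulti_evalP (α : Fin d → ℕ) (P : MvPolynomial (Fin d) ℝ) :
    pdMulti α (evalP P) = evalP (pderivMulti α P) := by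
  simp only [pdMulti, pderivMulti, List.ofFn_eq_map]
  refine (Semiconj.foldr_comp_map (fun i => ?_) _ P).symm
  exact Semiconj.iterate_right (fun P => (pd_evalP i P).symm) (α i)

lemma pderivMulti_bind₁_homothetySubst {R : Type*} [CommRing R] (z : Fin d → R) (a : R)
    (α : Fin d → ℕ) (P : MvPolynomial (Fin d) R) :
    pderivMulti α (bind₁ (homothetySubst z a) P)
      = a ^ (∑ i, α i) • bind₁ (homothetySubst z a) (pderivMulti α P) := by
  simp only [pderivMulti, List.ofFn_eq_map]
  rw [foldr_comp_map_apply_eq_prod_smul (c := fun i => a ^ α i), ← List.ofFn_eq_map,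
    List.prod_ofFn, Finset.prod_pow_eq_pow_sum]
  · intro i r Q
    exact ((Commute.iterate_right (fun Q => ((pderiv i).map_smul r Q).symm) _) Q).symm
  · intro i Q
    exact iterate_pderiv_bind₁_homothetySubst z a i (α i) Q

end Polynomial

section GrowthFunction

variable {d N : ℕ}

lemma evalP_smul (r : ℝ) (P : MvPolynomial (Fin d) ℝ) (y : EuclideanSpace ℝ (Fin d)) :
    evalP (r • P) y = r * evalP P y := by
  simp only [evalP, smul_eval]

lemma evalP_bind₁_homothetySubst (z : EuclideanSpace ℝ (Fin d)) (a : ℝ)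
    (P : MvPolynomial (Fin d) ℝ) (y : EuclideanSpace ℝ (Fin d)) :
    evalP (bind₁ (homothetySubst z.ofLp a) P) y = evalP P (z + a • (y - z)) := by
  simp only [evalP, eval_bind₁_homothetySubst]
  rfl

lemma pdMulti_evalP_bind₁_homothetySubst (z : EuclideanSpace ℝ (Fin d)) (a : ℝ)
    (α : Fin d → ℕ) (P : MvPolynomial (Fin d) ℝ) :
    pdMulti α (evalP (bind₁ (homothetySubst z.ofLp a) P)) z
      = a ^ (∑ i, α i) * pdMulti α (evalP P) z := by
  rw [pdMulti_evalP, pdMulti_evalP, pderivMulti_bind₁_homothetySubst, evalP_smul,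
    evalP_bind₁_homothetySubst, sub_self, smul_zero, add_zero]

lemma Dapply_evalP_bind₁_homothetySubst {k : ℕ}
    {c : (Fin d → ℕ) → EuclideanSpace ℝ (Fin d) → ℝ}
    (hhom : ∀ α : Fin d → ℕ, (∑ i, α i) < k → ∀ y, c α y = 0)
    (z : EuclideanSpace ℝ (Fin d)) (a : ℝ) (P : MvPolynomial (Fin d) ℝ) :
    Dapply k c (evalP (bind₁ (homothetySubst z.ofLp a) P)) z
      = a ^ k * Dapply k c (evalP P) z := by
  simp only [Dapply, Finset.mul_sum]
  refine Finset.sum_congr rfl fun s hs => Finset.sum_congr rfl fun α hα => ?_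
  have hα : ∑ i, α i = s := Finset.Nat.mem_antidiagonalTuple.mp hα
  rw [pdMulti_evalP_bind₁_homothetySubst, hα]
  rcases (Nat.lt_succ_iff.mp (Finset.mem_range.mp hs)).lt_or_eq with hlt | rfl
  · simp [hhom α (hα ▸ hlt) z]
  · ring

def exactWeights (k q : ℕ) (c : (Fin d → ℕ) → EuclideanSpace ℝ (Fin d) → ℝ)
    (z : EuclideanSpace ℝ (Fin d)) (x : Fin N → EuclideanSpace ℝ (Fin d)) : Set (Fin N → ℝ) :=
  {w | ∀ P : MvPolynomial (Fin d) ℝ, P.totalDegree < q →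
    Dapply k c (evalP P) z = ∑ j, w j * evalP P (x j)}

lemma rho1_eq_sInf_image (k q : ℕ) (c : (Fin d → ℕ) → EuclideanSpace ℝ (Fin d) → ℝ)
    (z : EuclideanSpace ℝ (Fin d)) (x : Fin N → EuclideanSpace ℝ (Fin d)) (μ : ℝ) :
    rho1 k q c z x μ
      = sInf ((fun w => ∑ j, |w j| * ‖x j - z‖ ^ μ) '' exactWeights k q c z x) := by
  simp only [rho1, exactWeights, Set.image, Set.mem_ofPred_eq, eq_comm]

variable {k q : ℕ} {c : (Fin d → ℕ) → EuclideanSpace ℝ (Fin d) → ℝ}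
  {z : EuclideanSpace ℝ (Fin d)} {x : Fin N → EuclideanSpace ℝ (Fin d)}

lemma mem_exactWeights_homothety_of_pow_smul_mem
    (hhom : ∀ α : Fin d → ℕ, (∑ i, α i) < k → ∀ y, c α y = 0) {a : ℝ} (ha : a ≠ 0)
    {w : Fin N → ℝ} (hw : a ^ k • w ∈ exactWeights k q c z x) :
    w ∈ exactWeights k q c z (fun j => z + a • (x j - z)) := by
  intro P hP
  have hQ := hw (bind₁ (homothetySubst z.ofLp a) P)
    ((totalDegree_bind₁_le (totalDegree_homothetySubst_le _ _) P).trans_lt hP)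
  simp only [Dapply_evalP_bind₁_homothetySubst hhom, evalP_bind₁_homothetySubst, Pi.smul_apply,
    smul_eq_mul, mul_assoc, ← Finset.mul_sum] at hQ
  exact mul_left_cancel₀ (pow_ne_zero k ha) hQ

lemma mem_exactWeights_homothety_iff
    (hhom : ∀ α : Fin d → ℕ, (∑ i, α i) < k → ∀ y, c α y = 0) {a : ℝ} (ha : a ≠ 0)
    (w : Fin N → ℝ) :
    w ∈ exactWeights k q c z (fun j => z + a • (x j - z))
      ↔ a ^ k • w ∈ exactWeights k q c z x := by
  refine ⟨fun hw => ?_, mem_exactWeights_homothety_of_pow_smul_mem hhom ha⟩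
  have hinv := mem_exactWeights_homothety_of_pow_smul_mem hhom (inv_ne_zero ha) (w := a ^ k • w)
    (by rwa [smul_smul, ← mul_pow, inv_mul_cancel₀ ha, one_pow, one_smul])
  simpa [smul_smul, inv_mul_cancel₀ ha] using hinv

lemma sum_abs_mul_norm_homothety_rpow {h : ℝ} (hh : 0 < h) (k : ℕ) (μ : ℝ) (w : Fin N → ℝ) :
    ∑ j, |w j| * ‖z + h • (x j - z) - z‖ ^ μ
      = h ^ (μ - k) * ∑ j, |(h ^ k • w) j| * ‖x j - z‖ ^ μ := by
  rw [Finset.mul_sum]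
  refine Finset.sum_congr rfl fun j _ => ?_
  rw [add_sub_cancel_left, norm_smul, Real.norm_of_nonneg hh.le,
    Real.mul_rpow hh.le (norm_nonneg _), Pi.smul_apply, smul_eq_mul, abs_mul,
    abs_of_pos (pow_pos hh k), Real.rpow_sub hh, Real.rpow_natCast]
  field_simp

end GrowthFunction

theorem growth_function_scaling_general (d N k q : ℕ)
    (c : (Fin d → ℕ) → EuclideanSpace ℝ (Fin d) → ℝ)
    (hhom : ∀ α : Fin d → ℕ, (∑ i, α i) < k → ∀ y, c α y = 0)
    (z : EuclideanSpace ℝ (Fin d)) (x : Fin N → EuclideanSpace ℝ (Fin d))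
    (μ : ℝ) (h : ℝ) (hh : 0 < h) :
    rho1 k q c z (fun j => z + h • (x j - z)) μ = h ^ (μ - (k : ℝ)) * rho1 k q c z x μ := by
  have hE : exactWeights k q c z (fun j => z + h • (x j - z))
      = (h ^ k)⁻¹ • exactWeights k q c z x := by
    ext w
    rw [Set.mem_smul_set_iff_inv_smul_mem₀ (inv_ne_zero (pow_ne_zero k hh.ne')), inv_inv]
    exact mem_exactWeights_homothety_iff hhom hh.ne' w
  rw [rho1_eq_sInf_image, rho1_eq_sInf_image, hE, ← smul_eq_mul,
    ← Real.sInf_smul_of_nonneg (Real.rpow_nonneg hh.le _), ← Set.image_smul, ← Set.image_smul,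
    Set.image_image, Set.image_image]
  congr 2
  funext w
  rw [sum_abs_mul_norm_homothety_rpow hh k, smul_smul, mul_inv_cancel₀ (pow_ne_zero k hh.ne'),
    one_smul, smul_eq_mul]

/-- Scaling of the growth function. For a homogeneous linear differential
operator D of order k (c_α = 0 for |α| < k) and the scaled set X^h with points z + h(xⱼ-z),
ρ_{q,D}(z,X^h,1,μ) = h^{μ-k} ρ_{q,D}(z,X,1,μ) for all h > 0 and μ ≥ 0. -/
theorem growth_function_scaling (d N k q : ℕ)
    (c : (Fin d → ℕ) → EuclideanSpace ℝ (Fin d) → ℝ)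
    (hhom : ∀ α : Fin d → ℕ, (∑ i, α i) < k → ∀ y, c α y = 0)
    (z : EuclideanSpace ℝ (Fin d)) (x : Fin N → EuclideanSpace ℝ (Fin d))
    (μ : ℝ) (hμ : 0 ≤ μ) (h : ℝ) (hh : 0 < h) :
    rho1 k q c z (fun j => z + h • (x j - z)) μ = h ^ (μ - (k : ℝ)) * rho1 k q c z x μ :=
  growth_function_scaling_general d N k q c hhom z x μ h hh
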